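/- Let i, j ∈ {0,1,2} and let s be a real number with −1/4 < s < 0. Then |γ_{i⊗j}'(s)/γ_{i⊗j}(s)| ≤ (d_{ij}/2)·(11/3 + log π + log(s/2 + 3)) + 5 + e_{i+j}/|s|. -/

import Mathlib

open Real

/-- The local parameters at infinity of the `k`-th symmetric power, for `k ∈ {0,1,2}`:
`P_0 = {0}`, `P_1 = {1/2, 3/2}`, `P_2 = {1, 1, 2}`. -/
noncomputable def localParams : ℕ → List ℝ
  | 0 => [0]
  | 1 => [1 / 2, 3 / 2]
  | 2 => [1, 1, 2]
  | _ => []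

/-- The Rankin–Selberg gamma factor
`γ_{i⊗j}(s) = ∏_{κ ∈ P_i} ∏_{ν ∈ P_j} π^(-s/2) Γ((s + κ + ν)/2)`. -/
noncomputable def rsGamma (i j : ℕ) (s : ℝ) : ℝ :=
  ((localParams i).map fun κ =>
    ((localParams j).map fun ν =>
      Real.pi ^ (-s / 2) * Real.Gamma ((s + κ + ν) / 2)).prod).prod

/-!
Each factor `π^(-s/2) Γ((s + c)/2)` has logarithmic derivative `-(log π)/2 + ψ((s + c)/2)/2`,
where `ψ = Γ'/Γ`. Since `log Γ` is convex, `ψ` is increasing on `(0, ∞)`, so on `[1, 2]` it lies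
between `ψ 1 = -γ` and `ψ 2 = 1 - γ`, hence `|ψ| ≤ 1` there. The recurrence
`ψ (x + 1) = ψ x + 1/x` then gives `|ψ x| ≤ 1 + 1/x` on `(0, 2]` and
`|ψ x| ≤ 1 + 1/(x + 1) + 1/|x|` on `(-1, 0)`. Summed over the `d_{ij}` factors, the `log π` terms
are exactly those of the bound, and for `s > -1/4` the poles `1/(s + κ + ν)` with `κ + ν ≥ 1/2`
contribute at most `4 d_{ij}/3 + 5`; only the factor `κ = ν = 0` of `γ_{0⊗0}` sees the pole at `0`.
-/

open Set

section ListProd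

variable {𝕜 𝕜' ι : Type*} [NontriviallyNormedField 𝕜] [NontriviallyNormedField 𝕜']
  [NormedAlgebra 𝕜 𝕜'] {l : List ι} {f : ι → 𝕜 → 𝕜'} {x : 𝕜}

theorem differentiableAt_list_prod_map (hd : ∀ i ∈ l, DifferentiableAt 𝕜 (f i) x) :
    DifferentiableAt 𝕜 (fun y => (l.map (f · y)).prod) x := by
  simp_rw [← Fin.prod_univ_fun_getElem]
  exact .fun_finsetProd fun k _ => hd _ (List.getElem_mem _)

theorem logDeriv_list_prod_map (hf : ∀ i ∈ l, f i x ≠ 0)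
    (hd : ∀ i ∈ l, DifferentiableAt 𝕜 (f i) x) :
    logDeriv (fun y => (l.map (f · y)).prod) x = (l.map fun i => logDeriv (f i) x).sum := by
  simp_rw [← Fin.prod_univ_fun_getElem, ← Fin.sum_univ_fun_getElem]
  exact logDeriv_prod (fun k _ => hf _ (List.getElem_mem _)) fun k _ => hd _ (List.getElem_mem _)

end ListProd

theorem abs_list_sum_map_le {ι : Type*} {l : List ι} {g h : ι → ℝ}
    (hgh : ∀ i ∈ l, |g i| ≤ h i) : |(l.map g).sum| ≤ (l.map h).sum := by
  simp_rw [← Fin.sum_univ_fun_getElem]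
  exact (Finset.abs_sum_le_sum_abs _ _).trans
    (Finset.sum_le_sum fun k _ => hgh _ (List.getElem_mem _))

theorem ne_neg_natCast_of_neg_one_lt {x : ℝ} (h0 : x ≠ 0) (h1 : -1 < x) :
    ∀ m : ℕ, x ≠ -m := by
  rintro (_ | m) h
  · simp_all
  · push_cast at h
    linarith [m.cast_nonneg (α := ℝ)]

theorem hasDerivAt_log_Gamma {x : ℝ} (hx : 0 < x) :
    HasDerivAt (log ∘ Gamma) (logDeriv Gamma x) x :=
  (differentiableAt_Gamma (ne_neg_natCast_of_neg_one_lt hx.ne' (by linarith))).hasDerivAt.log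
    (Gamma_pos_of_pos hx).ne'

theorem monotoneOn_logDeriv_Gamma : MonotoneOn (logDeriv Gamma) (Ioi 0) := by
  refine (convexOn_log_Gamma.monotoneOn_deriv fun x hx =>
    (hasDerivAt_log_Gamma hx).differentiableAt).congr fun x hx => ?_
  exact (hasDerivAt_log_Gamma hx).deriv

theorem logDeriv_Gamma_one : logDeriv Gamma 1 = -eulerMascheroniConstant := by
  rw [logDeriv_apply, hasDerivAt_Gamma_one.deriv, Gamma_one, div_one]

theorem logDeriv_Gamma_two : logDeriv Gamma 2 = 1 - eulerMascheroniConstant := by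
  have h := (hasDerivAt_Gamma_nat 1).deriv
  norm_num at h
  rw [logDeriv_apply, h, Gamma_two]
  ring

theorem abs_logDeriv_Gamma_le_one_of_mem_Icc {x : ℝ} (hx : x ∈ Icc 1 2) :
    |logDeriv Gamma x| ≤ 1 := by
  have h1 := monotoneOn_logDeriv_Gamma (by norm_num : (1 : ℝ) ∈ Ioi 0)
    (by simp only [mem_Ioi]; linarith [hx.1]) hx.1
  have h2 := monotoneOn_logDeriv_Gamma (by simp only [mem_Ioi]; linarith [hx.1])
    (by norm_num : (2 : ℝ) ∈ Ioi 0) hx.2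
  rw [logDeriv_Gamma_one] at h1
  rw [logDeriv_Gamma_two] at h2
  have := one_half_lt_eulerMascheroniConstant
  have := eulerMascheroniConstant_lt_two_thirds
  exact abs_le.2 ⟨by linarith, by linarith⟩

theorem logDeriv_Gamma_add_one {x : ℝ} (hx : ∀ m : ℕ, x ≠ -m) :
    logDeriv Gamma (x + 1) = logDeriv Gamma x + 1 / x := by
  have hx0 : x ≠ 0 := by simpa using hx 0
  have hx1 : ∀ m : ℕ, x + 1 ≠ -m := fun m h => hx (m + 1) (by push_cast; linarith)
  have hshift : logDeriv Gamma (x + 1) = logDeriv (fun y => Gamma (y + 1)) x := by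
    rw [← Function.comp_def, logDeriv_comp (g := fun y => y + 1) (differentiableAt_Gamma hx1)
      (by fun_prop)]
    simp
  have hrec : (fun y => Gamma (y + 1)) =ᶠ[nhds x] fun y => y * Gamma y := by
    filter_upwards [eventually_ne_nhds hx0] with y hy using Gamma_add_one hy
  rw [hshift, (logDeriv_congr_nhds hrec).eq_of_nhds, add_comm, ← logDeriv_id']
  exact logDeriv_mul (f := id) x hx0 (Gamma_ne_zero hx) differentiableAt_id
    (differentiableAt_Gamma hx)

theorem abs_logDeriv_Gamma_le_of_pos {x : ℝ} (h0 : 0 < x) (h2 : x ≤ 2) :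
    |logDeriv Gamma x| ≤ 1 + 1 / x := by
  have hinv : 0 < 1 / x := by positivity
  rcases le_or_gt 1 x with h1 | h1
  · linarith [abs_logDeriv_Gamma_le_one_of_mem_Icc ⟨h1, h2⟩]
  · have hrec := logDeriv_Gamma_add_one (ne_neg_natCast_of_neg_one_lt h0.ne' (by linarith))
    have hbound := abs_logDeriv_Gamma_le_one_of_mem_Icc (x := x + 1) ⟨by linarith, by linarith⟩
    rw [show logDeriv Gamma x = logDeriv Gamma (x + 1) - 1 / x by linarith]
    exact (abs_sub _ _).trans (by rw [abs_of_pos hinv]; linarith)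

theorem abs_logDeriv_Gamma_le_of_neg {x : ℝ} (h1 : -1 < x) (h0 : x < 0) :
    |logDeriv Gamma x| ≤ 1 + 1 / (x + 1) + 1 / |x| := by
  have hrec := logDeriv_Gamma_add_one (ne_neg_natCast_of_neg_one_lt h0.ne h1)
  have hbound := abs_logDeriv_Gamma_le_of_pos (x := x + 1) (by linarith) (by linarith)
  rw [show logDeriv Gamma x = logDeriv Gamma (x + 1) - 1 / x by linarith]
  exact (abs_sub _ _).trans (by rw [abs_div, abs_one]; linarith)

noncomputable def gammaFactor (c s : ℝ) : ℝ := π ^ (-s / 2) * Gamma ((s + c) / 2)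

theorem rsGamma_eq (i j : ℕ) : rsGamma i j = fun s => ((localParams i).map fun κ =>
    ((localParams j).map fun ν => gammaFactor (κ + ν) s).prod).prod := by
  funext s
  simp only [rsGamma, gammaFactor, add_assoc]

section gammaFactor

variable {c s : ℝ}

theorem gammaFactor_ne_zero (h : ∀ m : ℕ, (s + c) / 2 ≠ -m) : gammaFactor c s ≠ 0 :=
  mul_ne_zero (rpow_pos_of_pos pi_pos _).ne' (Gamma_ne_zero h)

theorem differentiableAt_gammaFactor (h : ∀ m : ℕ, (s + c) / 2 ≠ -m) :
    DifferentiableAt ℝ (gammaFactor c) s := by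
  have hΓ := (differentiableAt_Gamma h).comp s (f := fun t : ℝ => (t + c) / 2) (by fun_prop)
  exact DifferentiableAt.mul (by fun_prop (disch := positivity)) hΓ

theorem logDeriv_gammaFactor (h : ∀ m : ℕ, (s + c) / 2 ≠ -m) :
    logDeriv (gammaFactor c) s = -log π / 2 + logDeriv Gamma ((s + c) / 2) / 2 := by
  have hpow : logDeriv (fun t : ℝ => π ^ (-t / 2)) s = -log π / 2 := by
    rw [← Function.comp_def (fun y : ℝ => π ^ y),
      logDeriv_comp (by fun_prop (disch := positivity)) (by fun_prop), logDeriv_apply,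
      (hasStrictDerivAt_const_rpow pi_pos _).hasDerivAt.deriv]
    simp [field]
  have hΓ : logDeriv (fun t : ℝ => Gamma ((t + c) / 2)) s = logDeriv Gamma ((s + c) / 2) / 2 := by
    rw [← Function.comp_def Gamma,
      logDeriv_comp (g := fun t => (t + c) / 2) (differentiableAt_Gamma h) (by fun_prop)]
    simp [field]
  rw [← hpow, ← hΓ]
  exact logDeriv_mul s (rpow_pos_of_pos pi_pos _).ne' (Gamma_ne_zero (s := (s + c) / 2) h)
    (by fun_prop (disch := positivity))
    ((differentiableAt_Gamma h).comp s (f := fun t => (t + c) / 2) (by fun_prop))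

theorem abs_logDeriv_gammaFactor_le_of_pos (h0 : 0 < s + c) (h4 : s + c ≤ 4) :
    |logDeriv (gammaFactor c) s| ≤ log π / 2 + 1 / 2 + 1 / (s + c) := by
  have hlogπ : 0 ≤ log π := log_nonneg (by linarith [pi_gt_three])
  have hψ := abs_logDeriv_Gamma_le_of_pos (x := (s + c) / 2) (by positivity) (by linarith)
  rw [one_div_div, div_eq_mul_one_div 2] at hψ
  rw [logDeriv_gammaFactor (ne_neg_natCast_of_neg_one_lt (by positivity) (by linarith))]
  obtain ⟨hψl, hψu⟩ := abs_le.1 hψ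
  exact abs_le.2 ⟨by linarith, by linarith⟩

theorem abs_logDeriv_gammaFactor_zero_le (h2 : -2 < s) (h0 : s < 0) :
    |logDeriv (gammaFactor 0) s| ≤ log π / 2 + 1 / 2 + 1 / (s + 2) + 1 / |s| := by
  have hlogπ : 0 ≤ log π := log_nonneg (by linarith [pi_gt_three])
  have hψ := abs_logDeriv_Gamma_le_of_neg (x := (s + 0) / 2) (by linarith) (by linarith)
  rw [add_zero, abs_div, abs_two, one_div_div, div_add_one two_ne_zero, one_div_div,
    div_eq_mul_one_div 2, div_eq_mul_one_div 2 |s|] at hψ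
  rw [logDeriv_gammaFactor (ne_neg_natCast_of_neg_one_lt (by linarith) (by linarith)), add_zero]
  obtain ⟨hψl, hψu⟩ := abs_le.1 hψ
  exact abs_le.2 ⟨by linarith, by linarith⟩

end gammaFactor

section localParams

variable {k : ℕ} {κ : ℝ}

theorem nonneg_and_le_two_of_mem_localParams (h : κ ∈ localParams k) : 0 ≤ κ ∧ κ ≤ 2 := by
  rcases k with _ | _ | _ | k <;>
    simp only [localParams, List.mem_cons, List.not_mem_nil, or_false] at h <;>
    rcases h with rfl | rfl | rfl <;> norm_num

theorem one_half_le_of_mem_localParams (hk : k ≠ 0) (h : κ ∈ localParams k) : 1 / 2 ≤ κ := by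
  obtain _ | _ | _ | k := k
  · exact absurd rfl hk
  all_goals
    simp only [localParams, List.mem_cons, List.not_mem_nil, or_false] at h <;>
    rcases h with rfl | rfl | rfl <;> norm_num

theorem sum_localParams_le {i j : ℕ} (hi : i ≤ 2) (hj : j ≤ 2) (L : ℝ) :
    ((localParams i).map fun κ => ((localParams j).map fun ν => L + 1 / (κ + ν - 1 / 4)).sum).sum
      ≤ ((i : ℝ) + 1) * ((j : ℝ) + 1) * (L + 4 / 3) + 5 := by
  interval_cases i <;> interval_cases j <;> norm_num [localParams] <;> linarith

end localParams

section rsGamma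

variable {i j : ℕ} {s : ℝ}

theorem logDeriv_rsGamma
    (h : ∀ κ ∈ localParams i, ∀ ν ∈ localParams j, ∀ m : ℕ, (s + (κ + ν)) / 2 ≠ -m) :
    logDeriv (rsGamma i j) s = ((localParams i).map fun κ =>
      ((localParams j).map fun ν => logDeriv (gammaFactor (κ + ν)) s).sum).sum := by
  have hne (κ) (hκ : κ ∈ localParams i) :
      ((localParams j).map fun ν => gammaFactor (κ + ν) s).prod ≠ 0 :=
    List.prod_ne_zero (by simpa using fun ν hν => gammaFactor_ne_zero (h κ hκ ν hν))
  rw [rsGamma_eq, logDeriv_list_prod_map hne fun κ hκ =>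
    differentiableAt_list_prod_map fun ν hν => differentiableAt_gammaFactor (h κ hκ ν hν)]
  refine congrArg List.sum (List.map_congr_left fun κ hκ => ?_)
  exact logDeriv_list_prod_map (fun ν hν => gammaFactor_ne_zero (h κ hκ ν hν))
    fun ν hν => differentiableAt_gammaFactor (h κ hκ ν hν)

theorem abs_logDeriv_rsGamma_le (h00 : ¬(i = 0 ∧ j = 0)) (hs₁ : -(1 / 4) < s) (hs₂ : s < 0) :
    |logDeriv (rsGamma i j) s| ≤ ((localParams i).map fun κ =>
      ((localParams j).map fun ν => log π / 2 + 1 / 2 + 1 / (κ + ν - 1 / 4)).sum).sum := by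
  have hc (κ) (hκ : κ ∈ localParams i) (ν) (hν : ν ∈ localParams j) :
      1 / 2 ≤ κ + ν ∧ κ + ν ≤ 4 := by
    obtain ⟨hκ0, hκ2⟩ := nonneg_and_le_two_of_mem_localParams hκ
    obtain ⟨hν0, hν2⟩ := nonneg_and_le_two_of_mem_localParams hν
    refine ⟨?_, by linarith⟩
    by_cases hi : i = 0
    · linarith [one_half_le_of_mem_localParams (fun hj => h00 ⟨hi, hj⟩) hν]
    · linarith [one_half_le_of_mem_localParams hi hκ]
  rw [logDeriv_rsGamma fun κ hκ ν hν =>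
    ne_neg_natCast_of_neg_one_lt (by linarith [hc κ hκ ν hν]) (by linarith [hc κ hκ ν hν])]
  refine abs_list_sum_map_le fun κ hκ => abs_list_sum_map_le fun ν hν => ?_
  obtain ⟨hc₁, hc₄⟩ := hc κ hκ ν hν
  have hpole : 1 / (s + (κ + ν)) ≤ 1 / (κ + ν - 1 / 4) :=
    one_div_le_one_div_of_le (by linarith) (by linarith)
  linarith [abs_logDeriv_gammaFactor_le_of_pos (c := κ + ν) (s := s) (by linarith) (by linarith)]

end rsGamma

theorem rsGamma_logDeriv_bound_neg (i j : ℕ) (hi : i ≤ 2) (hj : j ≤ 2)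
    (s : ℝ) (hs₁ : -(1 / 4) < s) (hs₂ : s < 0) :
    |deriv (rsGamma i j) s / rsGamma i j s| ≤
      (((i : ℝ) + 1) * ((j : ℝ) + 1)) / 2 * (11 / 3 + Real.log Real.pi
        + Real.log (s / 2 + 3)) + 5
        + (if i = 0 ∧ j = 0 then (1 : ℝ) else 0) / |s| := by
  rw [← logDeriv_apply]
  have hlog : 0 ≤ log (s / 2 + 3) := log_nonneg (by linarith)
  by_cases h00 : i = 0 ∧ j = 0
  · obtain ⟨rfl, rfl⟩ := h00
    have hrs : rsGamma 0 0 = gammaFactor 0 := by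
      funext t
      simp [rsGamma, gammaFactor, localParams]
    have hpole : 1 / (s + 2) ≤ 1 := by
      rw [div_le_one (by linarith)]
      linarith
    rw [hrs, if_pos ⟨rfl, rfl⟩, Nat.cast_zero, zero_add, one_mul]
    linarith [abs_logDeriv_gammaFactor_zero_le (s := s) (by linarith) hs₂]
  · rw [if_neg h00, zero_div, add_zero]
    have hd : 0 ≤ ((i : ℝ) + 1) * ((j : ℝ) + 1) / 2 * log (s / 2 + 3) := by positivity
    calc _ ≤ _ := abs_logDeriv_rsGamma_le h00 hs₁ hs₂
      _ ≤ ((i : ℝ) + 1) * ((j : ℝ) + 1) * (log π / 2 + 1 / 2 + 4 / 3) + 5 :=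
        sum_localParams_le hi hj _
      _ ≤ _ := by linarith
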